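/- arXiv:2404.15443 — 6 statements merged into one kernel-verified Lean document; each statement's English description precedes it below -/
import Mathlib

section
/- Let C be a category with pullbacks, J a class of morphisms of C, and set K = J^⋔. Then for every object A of C, ^⋔(K/A) = (^⋔K)/A. -/
open CategoryTheory CategoryTheory.Limits

/-- The left lifting class `^⋔J` of a class of morphisms `J`. -/
def llp {C : Type*} [Category C] (J : MorphismProperty C) : MorphismProperty C :=
  fun _ _ f => ∀ ⦃X Y : C⦄ (g : X ⟶ Y), J g → HasLiftingProperty f g

/-- The right lifting class `J^⋔` of a class of morphisms `J`. -/
def rlp {C : Type*} [Category C] (J : MorphismProperty C) : MorphismProperty C :=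
  fun _ _ f => ∀ ⦃X Y : C⦄ (g : X ⟶ Y), J g → HasLiftingProperty g f

/-- The slice of a class of morphisms. -/
def sliceClass {C : Type*} [Category C] (J : MorphismProperty C) (A : C) :
    MorphismProperty (Over A) :=
  fun _ _ f => J f.left

/-- `rlp J` is stable under pullback. -/
lemma rlp_pullback {C : Type*} [Category C] [HasPullbacks C] (J : MorphismProperty C)
    {X Y V : C} (g : X ⟶ Y) (hg : rlp J g) (v : V ⟶ Y) :
    rlp J (pullback.snd g v) := by
  intro P Q j hj
  have := hg j hj
  constructor
  intro u w sq
  have sq' : CommSq (u ≫ pullback.fst g v) j g (w ≫ v) := ⟨by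
    simp only [← Category.assoc, ← sq.w]
    simp only [Category.assoc, pullback.condition]⟩
  exact ⟨⟨⟨pullback.lift sq'.lift w sq'.fac_right, by
    apply pullback.hom_ext <;> simp [sq'.fac_left, sq.w, pullback.lift_fst, pullback.lift_snd, pullback.lift_fst_assoc, pullback.lift_snd_assoc], by simp [pullback.lift_snd]⟩⟩⟩

/-- if `C` has pullbacks and `K = J^⋔`, then `^⋔(K/A) = (^⋔K)/A`. -/
theorem stmt_5 {C : Type*} [Category C] [HasPullbacks C]
    (J K : MorphismProperty C) (hK : K = rlp J) (A : C) :
    llp (sliceClass K A) = sliceClass (llp K) A := by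
  subst hK
  ext U V f
  constructor
  · intro hf X Y g hg
    constructor
    intro u v sq
    have hsnd : rlp J (pullback.snd g v) := rlp_pullback J g hg v
    let P : Over A := Over.mk (pullback.snd g v ≫ V.hom)
    let pbar : P ⟶ V := Over.homMk (pullback.snd g v) rfl
    have hpbar : sliceClass (rlp J) A pbar := hsnd
    have := hf pbar hpbar
    have hw : u ≫ g = f.left ≫ v := sq.w
    let top : U ⟶ P := Over.homMk (pullback.lift u f.left hw)
      (by simp [P, Over.w f, pullback.lift_fst, pullback.lift_snd, pullback.lift_fst_assoc, pullback.lift_snd_assoc])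
    have sq2 : CommSq top f pbar (𝟙 V) := ⟨by
      ext
      simp [top, pbar, pullback.lift_fst, pullback.lift_snd, pullback.lift_fst_assoc, pullback.lift_snd_assoc]⟩
    let L := sq2.lift
    refine ⟨⟨⟨L.left ≫ pullback.fst g v, ?_, ?_⟩⟩⟩
    · have h1 := congrArg CommaMorphism.left sq2.fac_left
      simp only [Over.comp_left] at h1
      rw [← Category.assoc, h1]
      simp [top, pullback.lift_fst, pullback.lift_snd, pullback.lift_fst_assoc, pullback.lift_snd_assoc]
    · have h2 := congrArg CommaMorphism.left sq2.fac_right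
      simp only [Over.comp_left] at h2
      have h2' : sq2.lift.left ≫ pullback.snd g v = 𝟙 V.left := h2
      show (sq2.lift.left ≫ pullback.fst g v) ≫ g = v
      simp only [Category.assoc, pullback.condition]
      rw [← Category.assoc, h2']
      simp
  · intro hf X Y g hg
    constructor
    intro u v sq
    have hw := congrArg CommaMorphism.left sq.w
    simp only [Over.comp_left] at hw
    have sqC : CommSq u.left f.left g.left v.left := ⟨hw⟩
    have := hf g.left hg
    refine ⟨⟨⟨Over.homMk sqC.lift ?_, ?_, ?_⟩⟩⟩
    · rw [← Over.w g, ← Category.assoc, sqC.fac_right, Over.w v]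
    · ext; simp
    · ext; simp
end

section
/- Let C be a category with pullbacks and (J, K) a closed lifting pair on C, i.e. J = ^⋔K and K = J^⋔. Then for every object A of C, (J/A, K/A) is a closed lifting pair on the slice category C/A, i.e. J/A = ^⋔(K/A) and K/A = (J/A)^⋔. -/
open CategoryTheory CategoryTheory.Limits

/-- Lifting in the slice follows from lifting of the underlying morphisms. -/
lemma hlp_of_left {C : Type*} [Category C] {A : C} {P Q R S : Over A}
    (f : P ⟶ Q) (g : R ⟶ S) (h : HasLiftingProperty f.left g.left) :
    HasLiftingProperty f g := by
  constructor
  intro u v sq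
  have sq' : CommSq u.left f.left g.left v.left :=
    ⟨by rw [← Over.comp_left, ← Over.comp_left, sq.w]⟩
  constructor
  refine ⟨⟨Over.homMk sq'.lift ?_, ?_, ?_⟩⟩
  · rw [← Over.w g, ← Category.assoc, sq'.fac_right, Over.w v]
  · ext; simp [sq'.fac_left]
  · ext; simp [sq'.fac_right]

/-- slicing preserves closed lifting pairs. -/
theorem stmt_6 {C : Type*} [Category C] [HasPullbacks C]
    (J K : MorphismProperty C) (hJ : J = llp K) (hK : K = rlp J) (A : C) :
    sliceClass J A = llp (sliceClass K A) ∧ sliceClass K A = rlp (sliceClass J A) := by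
  -- pullback stability of K
  have Kpb : ∀ ⦃X Y Z : C⦄ (g : X ⟶ Y) (v : Z ⟶ Y), K g → K (pullback.snd g v) := by
    intro X Y Z g v hg
    rw [hK]
    intro W W' j hj
    constructor
    intro u w sq
    have sq' : CommSq (u ≫ pullback.fst g v) j g (w ≫ v) :=
      ⟨by rw [Category.assoc, pullback.condition, ← Category.assoc, sq.w, Category.assoc]⟩
    have : HasLiftingProperty j g := (hK ▸ hg) j hj
    constructor
    refine ⟨⟨pullback.lift sq'.lift w (by rw [sq'.fac_right]), ?_, ?_⟩⟩
    · apply pullback.hom_ext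
      · rw [Category.assoc, pullback.lift_fst, sq'.fac_left]
      · rw [Category.assoc, pullback.lift_snd]; exact sq.w.symm
    · exact pullback.lift_snd _ _ _
  constructor
  · ext P Q f
    constructor
    · intro hf R S g hg
      exact hlp_of_left f g ((hJ ▸ hf) g.left hg)
    · intro hf
      show J f.left
      rw [hJ]
      intro X Y g hg
      constructor
      intro u v sq
      have hKsnd : K (pullback.snd g v) := Kpb g v hg
      -- the pullback as a morphism over A
      let R : Over A := Over.mk (pullback.snd g v ≫ Q.hom)
      let g' : R ⟶ Q := Over.homMk (pullback.snd g v) rfl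
      have hg' : sliceClass K A g' := hKsnd
      -- top map into the pullback, over A
      let t : P ⟶ R := Over.homMk (pullback.lift u f.left sq.w)
        (by dsimp [R]; rw [← Category.assoc, pullback.lift_snd, Over.w f])
      have sq' : CommSq t f g' (𝟙 Q) := ⟨by ext; simp [t, g']; exact pullback.lift_snd _ _ _⟩
      have := hf g' hg'
      have fl : f ≫ sq'.lift = t := sq'.fac_left
      have fr : sq'.lift ≫ g' = 𝟙 Q := sq'.fac_right
      have fl' : f.left ≫ sq'.lift.left = pullback.lift u f.left sq.w :=
        congrArg CommaMorphism.left fl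
      have fr' : sq'.lift.left ≫ pullback.snd g v = 𝟙 Q.left :=
        congrArg CommaMorphism.left fr
      exact ⟨⟨sq'.lift.left ≫ pullback.fst g v,
        by rw [← Category.assoc, fl', pullback.lift_fst],
        by rw [Category.assoc, pullback.condition, ← Category.assoc, fr',
          Category.id_comp]⟩⟩
  · ext P Q f
    constructor
    · intro hf R S g hg
      exact hlp_of_left g f ((hK ▸ hf) g.left hg)
    · intro hf
      show K f.left
      rw [hK]
      intro X Y j hj
      constructor
      intro u v sq
      -- make j a morphism over A
      let X' : Over A := Over.mk (u ≫ P.hom)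
      let Y' : Over A := Over.mk (v ≫ Q.hom)
      let j' : X' ⟶ Y' := Over.homMk j (by
        dsimp [X', Y']
        rw [← Over.w f, ← Category.assoc, ← Category.assoc, sq.w])
      have hj' : sliceClass J A j' := hj
      let u' : X' ⟶ P := Over.homMk u rfl
      let v' : Y' ⟶ Q := Over.homMk v rfl
      have sq' : CommSq u' j' f v' := ⟨by ext; simpa [u', v', j'] using sq.w⟩
      have := hf j' hj'
      exact ⟨⟨sq'.lift.left,
        congrArg CommaMorphism.left sq'.fac_left,
        congrArg CommaMorphism.left sq'.fac_right⟩⟩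
end

section
/- Let C be a category with pullbacks, f : A → B a morphism of C such that the pullback functor f^* : C/B → C/A admits a right adjoint f_* : C/A → C/B, and let (L, R) be a weak factorisation system on C. Then the arrow component of f^* maps L/B into L/A (i.e. f^*(L/B) ⊆ L/A) if and only if the arrow component of f_* maps R/A into R/B (i.e. f_*(R/A) ⊆ R/B). -/
open CategoryTheory CategoryTheory.Limits

/-- `(L, R)` is a weak factorisation system. -/
def IsWFS {C : Type*} [Category C] (L R : MorphismProperty C) : Prop :=
  L = llp R ∧ R = rlp L ∧
    ∀ ⦃X Y : C⦄ (f : X ⟶ Y), ∃ (Z : C) (l : X ⟶ Z) (r : Z ⟶ Y), L l ∧ R r ∧ l ≫ r = f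

/-- A lifting property between left components in `C` gives a lifting property in `Over A`. -/
lemma over_hasLiftingProperty_of_left {C : Type*} [Category C] {A : C}
    {X Y P Q : Over A} (u : X ⟶ Y) (g : P ⟶ Q)
    (h : HasLiftingProperty u.left g.left) : HasLiftingProperty u g := by
  constructor
  intro t b sq
  have sq' : CommSq t.left u.left g.left b.left :=
    ⟨by simpa using congrArg CommaMorphism.left sq.w⟩
  exact ⟨⟨⟨Over.homMk sq'.lift (by
      rw [← Over.w g, ← Category.assoc, sq'.fac_right, Over.w b]),
    by ext; simp [sq'.fac_left],
    by ext; simp [sq'.fac_right]⟩⟩⟩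

/-- `rlp L` is stable under base change. -/
lemma rlp_pullback_s11 {C : Type*} [Category C] [HasPullbacks C] (L : MorphismProperty C)
    {U V W : C} (r : U ⟶ V) (hr : rlp L r) (b : W ⟶ V) :
    rlp L (pullback.snd r b) := by
  intro M N l hl
  haveI := hr l hl
  constructor
  intro t c sq
  have w : (t ≫ pullback.fst r b) ≫ r = l ≫ (c ≫ b) := by
    rw [Category.assoc, pullback.condition, ← Category.assoc, sq.w, Category.assoc]
  have sq2 : CommSq (t ≫ pullback.fst r b) l r (c ≫ b) := ⟨w⟩
  refine ⟨⟨⟨pullback.lift sq2.lift c (by rw [sq2.fac_right]), ?_, ?_⟩⟩⟩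
  · apply pullback.hom_ext <;> simp [sq2.fac_left, sq.w, pullback.lift_fst, pullback.lift_snd]
  · simp [pullback.lift_snd]

/-- for `f : A ⟶ B` with pushforward `f_* : C/A ⥤ C/B` right adjoint
to the pullback functor `f^* : C/B ⥤ C/A`, and a weak factorisation system `(L, R)`
on `C`, the arrow component of `f^*` maps `L/B` into `L/A` iff the arrow component of
`f_*` maps `R/A` into `R/B`. -/
theorem stmt_11 {C : Type*} [Category C] [HasPullbacks C]
    {A B : C} (f : A ⟶ B) (fstar : Over A ⥤ Over B)
    (adj : Over.pullback f ⊣ fstar)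
    (L R : MorphismProperty C) (h : IsWFS L R) :
    (∀ ⦃X Y : Over B⦄ (g : X ⟶ Y), sliceClass L B g →
        sliceClass L A ((Over.pullback f).map g)) ↔
    (∀ ⦃X Y : Over A⦄ (g : X ⟶ Y), sliceClass R A g →
        sliceClass R B (fstar.map g)) := by
  obtain ⟨hL, hR, -⟩ := h
  constructor
  · -- f^* preserves L ⟹ f_* preserves R
    intro hyp X Y g hg
    show R (fstar.map g).left
    rw [hR]
    intro U V l hl
    constructor
    intro t b sq
    -- build the square in Over B
    let l' : Over.mk (l ≫ b ≫ (fstar.obj Y).hom) ⟶ Over.mk (b ≫ (fstar.obj Y).hom) :=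
      Over.homMk l (by simp)
    let t' : Over.mk (l ≫ b ≫ (fstar.obj Y).hom) ⟶ fstar.obj X := Over.homMk t (by
      show t ≫ _ = _
      rw [← Over.w (fstar.map g), ← Category.assoc, sq.w, Category.assoc]; rfl)
    let b' : Over.mk (b ≫ (fstar.obj Y).hom) ⟶ fstar.obj Y := Over.homMk b rfl
    have sq' : CommSq t' l' (fstar.map g) b' := ⟨by ext; simpa [l', t', b'] using sq.w⟩
    have hl' : sliceClass L B l' := hl
    have hLcomp : L (((Over.pullback f).map l').left) := hyp l' hl'
    haveI : HasLiftingProperty ((Over.pullback f).map l').left g.left := by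
      rw [hL] at hLcomp
      exact hLcomp g.left hg
    haveI : HasLiftingProperty ((Over.pullback f).map l') g :=
      over_hasLiftingProperty_of_left _ _ this
    haveI : HasLiftingProperty l' (fstar.map g) :=
      (adj.hasLiftingProperty_iff l' g).1 this
    refine ⟨⟨⟨(sq'.lift).left, ?_, ?_⟩⟩⟩
    · show (l' ≫ sq'.lift).left = t
      rw [sq'.fac_left]; rfl
    · show (sq'.lift ≫ fstar.map g).left = b
      rw [sq'.fac_right]; rfl
  · -- f_* preserves R ⟹ f^* preserves L
    intro hyp X Y g hg
    show L ((Over.pullback f).map g).left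
    rw [hL]
    intro U V r hr
    constructor
    intro t b sq
    -- pull back r along b to land in Over A
    have hrP : R (pullback.snd r b) := by
      rw [hR]; rw [hR] at hr
      exact rlp_pullback_s11 L r hr b
    let r' : Over.mk (pullback.snd r b ≫ ((Over.pullback f).obj Y).hom) ⟶
        (Over.pullback f).obj Y := Over.homMk (pullback.snd r b) rfl
    have hr' : sliceClass R A r' := hrP
    have hRcomp : R ((fstar.map r').left) := hyp r' hr'
    haveI : HasLiftingProperty g.left (fstar.map r').left := by
      rw [hR] at hRcomp
      exact hRcomp g.left hg
    haveI : HasLiftingProperty g (fstar.map r') :=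
      over_hasLiftingProperty_of_left _ _ this
    haveI : HasLiftingProperty ((Over.pullback f).map g) r' :=
      (adj.hasLiftingProperty_iff g r').2 this
    -- build the square in Over A with identity bottom
    let t' : (Over.pullback f).obj X ⟶
        Over.mk (pullback.snd r b ≫ ((Over.pullback f).obj Y).hom) := Over.homMk
      (pullback.lift t ((Over.pullback f).map g).left sq.w)
      (by
        rw [show (Over.mk (pullback.snd r b ≫ ((Over.pullback f).obj Y).hom)).hom =
            pullback.snd r b ≫ ((Over.pullback f).obj Y).hom from rfl, ← Category.assoc, pullback.lift_snd,
          Over.w ((Over.pullback f).map g)])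
    have sq' : CommSq t' ((Over.pullback f).map g) r' (𝟙 _) :=
      ⟨by ext; simp [t', r', pullback.lift_snd]⟩
    have fl : ((Over.pullback f).map g).left ≫ (sq'.lift).left =
        pullback.lift t ((Over.pullback f).map g).left sq.w := by
      rw [show (((Over.pullback f).map g).left ≫ (sq'.lift).left) =
        (((Over.pullback f).map g) ≫ sq'.lift).left from rfl, sq'.fac_left]
      rfl
    have fr : (sq'.lift).left ≫ pullback.snd r b = 𝟙 _ := by
      rw [show ((sq'.lift).left ≫ pullback.snd r b) = (sq'.lift ≫ r').left from rfl,
        sq'.fac_right]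
      rfl
    refine ⟨⟨⟨(sq'.lift).left ≫ pullback.fst r b, ?_, ?_⟩⟩⟩
    · rw [← Category.assoc, fl, pullback.lift_fst]
    · rw [Category.assoc, pullback.condition, ← Category.assoc, fr, Category.id_comp]
end

section
/- Let C be a category with pullbacks, f : A → B a morphism of C such that the pullback functor f^* : C/B → C/A admits a right adjoint f_* : C/A → C/B, and let (J, K) be a closed lifting pair on C. Then f has the Frobenius property with respect to (J, K) (i.e. f^*(J/B) ⊆ J/A) if and only if f has the pushforward property (i.e. f_*(K/A) ⊆ K/B). -/
open CategoryTheory CategoryTheory.Limits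

/-- If the underlying morphisms have the lifting property in `C`, then the
morphisms in the slice have the lifting property in the slice. -/
lemma hasLiftingProperty_over {C : Type*} [Category C] {Z : C}
    {X Y P Q : Over Z} (u : X ⟶ Y) (v : P ⟶ Q)
    (h : HasLiftingProperty u.left v.left) : HasLiftingProperty u v := by
  constructor
  intro a b sq
  have sq' : CommSq a.left u.left v.left b.left :=
    ⟨by simpa using congrArg CategoryTheory.CommaMorphism.left sq.w⟩
  have := h
  refine ⟨⟨⟨Over.homMk sq'.lift ?_, ?_, ?_⟩⟩⟩
  · have : sq'.lift ≫ v.left ≫ Q.hom = b.left ≫ Q.hom := by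
      rw [← Category.assoc, sq'.fac_right]
    simpa [Over.w] using this
  · ext
    simpa using sq'.fac_left
  · ext
    simpa using sq'.fac_right

/-- Lifting properties are stable under pullback on the right. -/
lemma hasLiftingProperty_pullback_snd {C : Type*} [Category C] [HasPullbacks C]
    {E F X Y Z : C} (i : E ⟶ F) (p : X ⟶ Y) (b : Z ⟶ Y)
    (h : HasLiftingProperty i p) : HasLiftingProperty i (pullback.snd p b) := by
  constructor
  intro t g sq
  have sq2 : CommSq (t ≫ pullback.fst p b) i p (g ≫ b) :=
    ⟨by rw [Category.assoc, pullback.condition, ← Category.assoc, sq.w, Category.assoc]⟩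
  have := h
  refine ⟨⟨⟨pullback.lift sq2.lift g (by rw [sq2.fac_right]), ?_, ?_⟩⟩⟩
  · apply pullback.hom_ext
    · rw [Category.assoc, pullback.lift_fst]; exact sq2.fac_left
    · rw [Category.assoc, pullback.lift_snd]; exact sq.w.symm
  · exact pullback.lift_snd _ _ _

/-- for `f : A ⟶ B` with pushforward `f_*` right adjoint to the
pullback functor `f^*`, and a closed lifting pair `(J, K)` on `C`, `f` has the
Frobenius property (`f^*(J/B) ⊆ J/A`) iff `f` has the pushforward property
(`f_*(K/A) ⊆ K/B`). -/
theorem stmt_12 {C : Type*} [Category C] [HasPullbacks C]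
    {A B : C} (f : A ⟶ B) (fstar : Over A ⥤ Over B)
    (adj : Over.pullback f ⊣ fstar)
    (J K : MorphismProperty C) (hJ : J = llp K) (hK : K = rlp J) :
    (∀ ⦃X Y : Over B⦄ (g : X ⟶ Y), sliceClass J B g →
        sliceClass J A ((Over.pullback f).map g)) ↔
    (∀ ⦃X Y : Over A⦄ (g : X ⟶ Y), sliceClass K A g →
        sliceClass K B (fstar.map g)) := by
  constructor
  · -- Frobenius ⇒ pushforward
    intro hF X Y g hg
    show K (fstar.map g).left
    rw [hK]
    intro P Q j hj
    constructor
    intro t b sq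
    -- promote the square to `Over B`
    set P' : Over B := Over.mk (t ≫ (fstar.obj X).hom) with hP'
    set Q' : Over B := Over.mk (b ≫ (fstar.obj Y).hom) with hQ'
    have wj : j ≫ b ≫ (fstar.obj Y).hom = t ≫ (fstar.obj X).hom := by
      rw [← Category.assoc, ← sq.w, Category.assoc, Over.w (fstar.map g)]
    have hj' : HasLiftingProperty
        (Over.homMk j wj : P' ⟶ Q') (fstar.map g) := by
      rw [← adj.hasLiftingProperty_iff]
      apply hasLiftingProperty_over
      have hJpb : J ((Over.pullback f).map (Over.homMk j wj : P' ⟶ Q')).left :=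
        hF (Over.homMk j wj : P' ⟶ Q') hj
      rw [hJ] at hJpb
      exact hJpb g.left hg
    have sq' : CommSq (Over.homMk t rfl : P' ⟶ fstar.obj X)
        (Over.homMk j wj : P' ⟶ Q') (fstar.map g)
        (Over.homMk b rfl : Q' ⟶ fstar.obj Y) := ⟨by ext; simpa using sq.w⟩
    have := hj'
    exact ⟨⟨⟨sq'.lift.left,
      by simpa only [Over.comp_left, Over.homMk_left] using
        congrArg CategoryTheory.CommaMorphism.left sq'.fac_left,
      by simpa only [Over.comp_left, Over.homMk_left] using
        congrArg CategoryTheory.CommaMorphism.left sq'.fac_right⟩⟩⟩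
  · -- pushforward ⇒ Frobenius
    intro hP X Y g hg
    show J ((Over.pullback f).map g).left
    rw [hJ]
    intro P Q k hk
    constructor
    intro t b sq
    -- pull `k` back to a morphism over `A`
    let Y' := (Over.pullback f).obj Y
    let W : Over A := Over.mk (pullback.snd k b ≫ Y'.hom)
    have hkK : K (pullback.snd k b) := by
      rw [hK]
      intro E F j hj
      exact hasLiftingProperty_pullback_snd j k b (by
        have := hk; rw [hK] at this; exact this j hj)
    let k'' : W ⟶ Y' := Over.homMk (pullback.snd k b) rfl
    have hlift : HasLiftingProperty ((Over.pullback f).map g) k'' := by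
      rw [adj.hasLiftingProperty_iff]
      apply hasLiftingProperty_over
      have hKp : K (fstar.map k'').left := hP k'' hkK
      rw [hK] at hKp
      exact hKp g.left hg
    have wtop : pullback.lift t ((Over.pullback f).map g).left sq.w ≫
        (pullback.snd k b ≫ Y'.hom) = ((Over.pullback f).obj X).hom := by
      rw [← Category.assoc, pullback.lift_snd]
      exact Over.w ((Over.pullback f).map g)
    have sq' : CommSq
        (Over.homMk (pullback.lift t ((Over.pullback f).map g).left sq.w) wtop :
          (Over.pullback f).obj X ⟶ W)
        ((Over.pullback f).map g) k'' (𝟙 Y') := ⟨by ext; simp [k'']; rw [pullback.lift_snd]; exact (Category.comp_id _).symm⟩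
    have := hlift
    refine ⟨⟨⟨sq'.lift.left ≫ pullback.fst k b, ?_, ?_⟩⟩⟩
    · have h1 := congrArg CategoryTheory.CommaMorphism.left sq'.fac_left
      simp only [Over.comp_left, Over.homMk_left] at h1
      rw [← Category.assoc, h1, pullback.lift_fst]
    · have h2 := congrArg CategoryTheory.CommaMorphism.left sq'.fac_right
      simp only [Over.comp_left, Over.homMk_left, Over.id_left, k''] at h2
      rw [Category.assoc, pullback.condition, ← Category.assoc, h2, Category.id_comp]
end

section
/- Let C be a locally cartesian closed category (C has pullbacks and every pullback functor f^* : C/B → C/A admits a right adjoint f_*) and let (L, R) be a weak factorisation system on C. Then L is closed under pullback along R-maps (for every f : A → B in R and every g : X → B in L, the pullback of g along f lies in L) if and only if R is closed under pushforward along R-maps (for every f : A → B in R and every object g : X → A of C/A with g ∈ R, the morphism f_*(g) : f_*X → B lies in R). -/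
open CategoryTheory CategoryTheory.Limits

section Aux

variable {C : Type*} [Category C]

/-- A right adjoint preserves terminal objects. -/
noncomputable def isTerminal_of_adj {D : Type*} [Category D] {F : C ⥤ D} {G : D ⥤ C}
    (adj : F ⊣ G) {T : D} (hT : IsTerminal T) : IsTerminal (G.obj T) :=
  IsTerminal.ofUniqueHom (fun Z => (adj.homEquiv Z T) (hT.from (F.obj Z)))
    (fun Z m => (adj.homEquiv Z T).symm.injective (hT.hom_ext _ _))

/-- If the underlying morphisms lift, then the morphisms in the slice lift. -/
lemma over_hlp {T : C} {a b c d : Over T} (i : a ⟶ b) (p : c ⟶ d)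
    (h : HasLiftingProperty i.left p.left) : HasLiftingProperty i p := by
  constructor
  intro t s sq
  have sq' : CommSq t.left i.left p.left s.left :=
    ⟨by rw [← Over.comp_left, ← Over.comp_left, sq.w]⟩
  haveI := h.sq_hasLift sq'
  exact CommSq.HasLift.mk'
    { l := Over.homMk sq'.lift
        (by rw [← Over.w p, ← Category.assoc, sq'.fac_right, Over.w s])
      fac_left := by ext; simpa using sq'.fac_left
      fac_right := by ext; simpa using sq'.fac_right }

/-- Lifting properties are stable under pullbacks on the right. -/
lemma hlp_pullback_fst [HasPullbacks C] {U V Z : C} (v : Z ⟶ V) (r : U ⟶ V)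
    {X' Y' : C} (ℓ : X' ⟶ Y') [HasLiftingProperty ℓ r] :
    HasLiftingProperty ℓ (pullback.fst v r) := by
  constructor
  intro t b sq
  have sq2 : CommSq (t ≫ pullback.snd v r) ℓ r (b ≫ v) :=
    ⟨by rw [Category.assoc, ← pullback.condition, ← Category.assoc, sq.w, Category.assoc]⟩
  haveI : sq2.HasLift := HasLiftingProperty.sq_hasLift sq2
  exact CommSq.HasLift.mk'
    { l := pullback.lift b sq2.lift (by rw [sq2.fac_right])
      fac_left := by
        apply pullback.hom_ext
        · simpa [pullback.lift_fst] using sq.w.symm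
        · simpa [pullback.lift_snd] using sq2.fac_left
      fac_right := by simp [pullback.lift_fst] }

end Aux

/-- Frobenius equivalence for a WFS: in a locally cartesian closed
category (pullbacks exist and each pullback functor `f^*` has a right adjoint
`f_*`), for a weak factorisation system `(L, R)`: `L` is closed under pullback along
`R`-maps iff `R` is closed under pushforward along `R`-maps. -/
theorem stmt_13 {C : Type*} [Category C] [HasPullbacks C]
    (pushforward : ∀ {A B : C}, (A ⟶ B) → (Over A ⥤ Over B))
    (adj : ∀ {A B : C} (f : A ⟶ B), Over.pullback f ⊣ pushforward f)
    (L R : MorphismProperty C) (h : IsWFS L R) :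
    (∀ ⦃A B : C⦄ (f : A ⟶ B), R f → ∀ ⦃X : C⦄ (g : X ⟶ B), L g →
        L ((Over.pullback f).obj (Over.mk g)).hom) ↔
    (∀ ⦃A B : C⦄ (f : A ⟶ B), R f → ∀ ⦃X : C⦄ (g : X ⟶ A), R g →
        R ((pushforward f).obj (Over.mk g)).hom) := by
  obtain ⟨hL, hR, -⟩ := h
  constructor
  · -- pullback-stability of L implies pushforward-stability of R
    intro hyp A B f hf X g hg
    rw [hR]
    intro X' Y' ℓ hℓ
    have hℓ' : llp R ℓ := by rwa [hL] at hℓ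
    constructor
    intro t b sq
    -- work in Over B
    let q : Over A := Over.mk g
    let x : Over B := Over.mk (ℓ ≫ b)
    let y : Over B := Over.mk b
    let i' : x ⟶ y := Over.homMk ℓ rfl
    let t' : x ⟶ (pushforward f).obj q := Over.homMk t (by exact sq.w)
    let t'' : (Over.pullback f).obj x ⟶ q := ((adj f).homEquiv x q).symm t'
    -- the pulled back morphism
    let m : ((Over.pullback f).obj x).left ⟶ ((Over.pullback f).obj y).left :=
      ((Over.pullback f).map i').left
    -- pullback.fst b f is in R
    have hfstb : R (pullback.fst b f) := by
      rw [hR]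
      intro X₂ Y₂ g₂ hg₂
      have hg₂' : llp R g₂ := by rwa [hL] at hg₂
      haveI : HasLiftingProperty g₂ f := hg₂' f hf
      exact hlp_pullback_fst b f g₂
    -- hence the pullback of ℓ along it is in L
    have hsnd : L (pullback.snd ℓ (pullback.fst b f)) := by
      simpa using hyp (pullback.fst b f) hfstb ℓ hℓ
    have hsnd' : llp R (pullback.snd ℓ (pullback.fst b f)) := by rwa [hL] at hsnd
    haveI : HasLiftingProperty (pullback.snd ℓ (pullback.fst b f)) g := hsnd' g hg
    have hm : HasLiftingProperty m g := by
      have eq : m = (pullbackRightPullbackFstIso b f ℓ).inv ≫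
          pullback.snd ℓ (pullback.fst b f) := by
        apply pullback.hom_ext
        · simp [m, i', x, y, pullback.lift_fst]
        · simp [m, x, y, pullback.lift_snd]
      rw [eq]
      infer_instance
    -- lifting square for m against g
    have sq3 : CommSq t''.left m g ((Over.pullback f).obj y).hom :=
      ⟨(Over.w t'').trans (Over.w ((Over.pullback f).map i')).symm⟩
    haveI := hm.sq_hasLift sq3
    let K : (Over.pullback f).obj y ⟶ q := Over.homMk sq3.lift (sq3.fac_right)
    have hK : (Over.pullback f).map i' ≫ K = t'' := by
      ext
      exact sq3.fac_left
    let lift' : y ⟶ (pushforward f).obj q := (adj f).homEquiv y q K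
    have h1 : i' ≫ lift' = t' := by
      show i' ≫ (adj f).homEquiv y q K = t'
      rw [← Adjunction.homEquiv_naturality_left, hK]
      exact ((adj f).homEquiv x q).apply_symm_apply t'
    exact CommSq.HasLift.mk'
      { l := lift'.left
        fac_left := congrArg CommaMorphism.left h1
        fac_right := Over.w lift' }
  · -- pushforward-stability of R implies pullback-stability of L
    intro hyp A B f hf X g hg
    rw [hL]
    intro U V r hr
    have hg' : llp R g := by rwa [hL] at hg
    constructor
    intro u v sq
    -- pull back r along v, obtaining an R-map over A
    have hrA : R (pullback.fst v r) := by
      rw [hR]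
      intro X₂ Y₂ g₂ hg₂
      have hg₂' : llp R g₂ := by rwa [hL] at hg₂
      haveI : HasLiftingProperty g₂ r := hg₂' r hr
      exact hlp_pullback_fst v r g₂
    let q : Over A := Over.mk (pullback.fst v r)
    have hfq : R ((pushforward f).obj q).hom := hyp f hf (pullback.fst v r) hrA
    -- terminal objects
    have hTA : IsTerminal (Over.mk (𝟙 A)) := Over.mkIdTerminal
    have hTB : IsTerminal (Over.mk (𝟙 B)) := Over.mkIdTerminal
    have hGTA : IsTerminal ((pushforward f).obj (Over.mk (𝟙 A))) :=
      isTerminal_of_adj (adj f) hTA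
    have hPTB : IsTerminal ((Over.pullback f).obj (Over.mk (𝟙 B))) :=
      isTerminal_of_adj (Over.mapPullbackAdj f) hTB
    -- the structure map of the pushforward of the terminal object is an iso
    let u2 : (pushforward f).obj (Over.mk (𝟙 A)) ⟶ Over.mk (𝟙 B) :=
      Over.homMk ((pushforward f).obj (Over.mk (𝟙 A))).hom (Category.comp_id _)
    haveI : IsIso u2 := ⟨hGTA.from _, hGTA.hom_ext _ _, hTB.hom_ext _ _⟩
    haveI : IsIso u2.left := (Over.forget B).map_isIso u2
    have hiso : IsIso ((pushforward f).obj (Over.mk (𝟙 A))).hom := by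
      have : ((pushforward f).obj (Over.mk (𝟙 A))).hom = u2.left := by simp [u2]
      rw [this]; infer_instance
    -- the underlying map of the pushforward of τq is in R
    let τq : q ⟶ Over.mk (𝟙 A) := Over.homMk q.hom (Category.comp_id _)
    let n := ((pushforward f).map τq).left
    have hn : HasLiftingProperty g n := by
      have hw : n ≫ ((pushforward f).obj (Over.mk (𝟙 A))).hom =
          ((pushforward f).obj q).hom := Over.w ((pushforward f).map τq)
      haveI := hiso
      have eqn : n = ((pushforward f).obj q).hom ≫
          inv ((pushforward f).obj (Over.mk (𝟙 A))).hom := by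
        rw [IsIso.eq_comp_inv]; exact hw
      haveI : HasLiftingProperty g ((pushforward f).obj q).hom := hg' _ hfq
      rw [eqn]
      infer_instance
    -- transfer the lifting property through the adjunction
    let τg : Over.mk g ⟶ Over.mk (𝟙 B) := Over.homMk g (Category.comp_id _)
    have hslice : HasLiftingProperty τg ((pushforward f).map τq) :=
      over_hlp τg ((pushforward f).map τq) (by exact hn)
    have hj : HasLiftingProperty ((Over.pullback f).map τg) τq :=
      ((adj f).hasLiftingProperty_iff τg τq).2 hslice
    -- assemble the lift
    let P := (Over.pullback f).obj (Over.mk g)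
    let w0 : P.left ⟶ pullback v r := pullback.lift P.hom u sq.w.symm
    let w' : P ⟶ q := Over.homMk w0 (by simp [w0, q, pullback.lift_fst])
    have sq4 : CommSq w' ((Over.pullback f).map τg) τq (hTA.from _) :=
      ⟨hTA.hom_ext _ _⟩
    haveI := hj.sq_hasLift sq4
    let s' : Over.mk (𝟙 A) ⟶ q := hPTB.from (Over.mk (𝟙 A)) ≫ sq4.lift
    have key : hTA.from P ≫ s' = w' := by
      have : hTA.from P ≫ hPTB.from (Over.mk (𝟙 A)) = (Over.pullback f).map τg :=
        hPTB.hom_ext _ _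
      rw [show s' = hPTB.from (Over.mk (𝟙 A)) ≫ sq4.lift from rfl,
        ← Category.assoc, this, sq4.fac_left]
    have hτP : (hTA.from P).left = P.hom := by simpa using Over.w (hTA.from P)
    have hfst : s'.left ≫ pullback.fst v r = 𝟙 A := Over.w s'
    exact CommSq.HasLift.mk'
      { l := s'.left ≫ pullback.snd v r
        fac_left := by
          have : P.hom ≫ s'.left = w0 := by
            rw [← hτP]
            have := congrArg CommaMorphism.left key
            simpa [w'] using this
          rw [← Category.assoc, this]
          simp [w0, pullback.lift_snd]
        fac_right := by
          rw [Category.assoc, ← pullback.condition, ← Category.assoc, hfst]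
          simp }
end

section
/- Let C be a category with pullbacks in which every pullback functor along a K-map admits a right adjoint (pushforward), let J and K be classes of morphisms of C closed under isomorphisms with K closed under pullbacks, and let f : A → B be a morphism in K. If for every morphism h : X → Y in K the object component of the pushforward functor h_* preserves K-maps (for every object g : Z → X of C/X with g ∈ K, the morphism h_*g lies in K), then the arrow component of f_* preserves K-maps, i.e. f_*(K/A) ⊆ K/B. -/
open CategoryTheory CategoryTheory.Limits

open CategoryTheory CategoryTheory.Limits

set_option maxHeartbeats 2000000 in
theorem my_aux {C : Type*} [Category C] [HasPullbacks C]
    (K : MorphismProperty C) (hKiso : K.RespectsIso)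
    {A B : C} {f : A ⟶ B} {F : Over A ⥤ Over B} (adjF : Over.pullback f ⊣ F)
    {X Y : Over A} (g : X ⟶ Y)
    {G : Over (pullback (F.obj Y).hom f) ⥤ Over (F.obj Y).left}
    (adjG : Over.pullback (pullback.fst (F.obj Y).hom f) ⊣ G)
    (hT : K ((G.obj (Over.mk (pullback.fst ((adjF.counit.app Y).left) g.left))).hom)) :
    K ((F.map g).left) := by
  let P : C := pullback (F.obj Y).hom f
  let p : P ⟶ (F.obj Y).left := pullback.fst (F.obj Y).hom f
  let e : P ⟶ Y.left := (adjF.counit.app Y).left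
  let m : (F.obj X).left ⟶ (F.obj Y).left := (F.map g).left
  have hm : m ≫ (F.obj Y).hom = (F.obj X).hom := Over.w (F.map g)
  have he : e ≫ Y.hom = pullback.snd (F.obj Y).hom f := Over.w (adjF.counit.app Y)
  let eX : pullback (F.obj X).hom f ⟶ X.left := (adjF.counit.app X).left
  have heX : eX ≫ X.hom = pullback.snd (F.obj X).hom f := Over.w (adjF.counit.app X)
  let Z : Over P := Over.mk (pullback.fst e g.left)
  let T : Over (F.obj Y).left := G.obj Z
  -- naturality of the counit of adjF at g, on left components
  have hnat : pullback.lift (pullback.fst (F.obj X).hom f ≫ m)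
      (pullback.snd (F.obj X).hom f)
        (by rw [Category.assoc, Over.w (F.map g), pullback.condition]) ≫ e
      = eX ≫ g.left := by
    have h1 := adjF.counit.naturality g
    have h2 := congrArg CommaMorphism.left h1
    dsimp at h2
    convert h2 using 2
    rfl
  -- the canonical map n : pullback (F.obj X).hom f ⟶ P
  let n : pullback (F.obj X).hom f ⟶ P :=
    pullback.lift (pullback.fst (F.obj X).hom f ≫ m) (pullback.snd (F.obj X).hom f)
      (by rw [Category.assoc, Over.w (F.map g), pullback.condition])
  -- the comparison map j : pullback m p ⟶ pullback (F.obj X).hom f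
  let j : pullback m p ⟶ pullback (F.obj X).hom f :=
    pullback.lift (pullback.fst m p) (pullback.snd m p ≫ pullback.snd (F.obj Y).hom f)
      (by
        simp only [m, p]
        have h1 : pullback.fst (F.map g).left (pullback.fst (F.obj Y).hom f) ≫ (F.map g).left
            = pullback.snd _ _ ≫ pullback.fst (F.obj Y).hom f := pullback.condition
        rw [← Over.w (F.map g), reassoc_of% h1, pullback.condition, Category.assoc])
  let x : pullback m p ⟶ X.left := j ≫ eX
  have hjn : j ≫ n = pullback.snd m p := by
    apply pullback.hom_ext
    · simp only [n, j, Category.assoc, pullback.lift_fst, pullback.lift_fst_assoc]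
      rw [pullback.condition]
    · simp only [n, j, p, Category.assoc, pullback.lift_snd]
  have hx : x ≫ g.left = pullback.snd m p ≫ e := by
    simp only [x, Category.assoc, ← hnat]
    rw [← hjn]
    simp only [n, Category.assoc]
  -- the morphism α : (Over.pullback p).obj (Over.mk m) ⟶ Z
  let α : (Over.pullback p).obj (Over.mk m) ⟶ Z :=
    Over.homMk (pullback.lift (pullback.snd m p) x hx.symm)
      (by simp only [Z, Over.mk_hom, Over.pullback_obj_hom]; exact pullback.lift_fst _ _ _)
  let φ : Over.mk m ⟶ T := (adjG.homEquiv (Over.mk m) Z) α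
  have hφw : φ.left ≫ T.hom = m := Over.w φ
  have hφ : (Over.pullback p).map φ ≫ adjG.counit.app Z = α := by
    have h := (adjG.homEquiv (Over.mk m) Z).symm_apply_apply α
    rwa [Adjunction.homEquiv_counit] at h
  -- counit of adjG at Z
  let c : pullback T.hom p ⟶ pullback e g.left := (adjG.counit.app Z).left
  have hc : c ≫ pullback.fst e g.left = pullback.snd T.hom p := Over.w (adjG.counit.app Z)
  -- comparison maps
  let k0 : pullback (T.hom ≫ (F.obj Y).hom) f ⟶ P :=
    pullback.lift (pullback.fst _ _ ≫ T.hom) (pullback.snd _ _)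
      (by rw [Category.assoc, ← pullback.condition])
  let k : pullback (T.hom ≫ (F.obj Y).hom) f ⟶ pullback T.hom p :=
    pullback.lift (pullback.fst _ _) k0 (by simp only [k0, p, pullback.lift_fst])
  let k' : pullback T.hom p ⟶ pullback (T.hom ≫ (F.obj Y).hom) f :=
    pullback.lift (pullback.fst T.hom p) (pullback.snd T.hom p ≫ pullback.snd (F.obj Y).hom f)
      (by
        simp only [p]
        rw [← Category.assoc, pullback.condition (f := T.hom) (g := pullback.fst (F.obj Y).hom f),
          Category.assoc, Category.assoc, pullback.condition])
  have hk'k : k' ≫ k = 𝟙 _ := by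
    apply pullback.hom_ext
    · simp only [k', k, Category.assoc, pullback.lift_fst, Category.id_comp]
    · apply pullback.hom_ext
      · simp only [k', k, k0, p, Category.assoc, pullback.lift_snd, pullback.lift_fst,
          pullback.lift_fst_assoc, Category.id_comp]
        rw [← pullback.condition]
      · simp only [k', k, k0, Category.assoc, pullback.lift_snd, Category.id_comp]
  -- β : (Over.pullback f).obj (Over.mk (T.hom ≫ q)) ⟶ X
  let β : (Over.pullback f).obj (Over.mk (T.hom ≫ (F.obj Y).hom)) ⟶ X :=
    Over.homMk (k ≫ c ≫ pullback.snd e g.left)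
      (by
        simp only [Category.assoc, ← Over.w g, ← pullback.condition_assoc (f := e) (g := g.left)]
        rw [reassoc_of% hc, he]
        simp only [k, k0, p, Category.assoc, pullback.lift_snd, pullback.lift_snd_assoc]
        rfl)
  let ψ0 : Over.mk (T.hom ≫ (F.obj Y).hom) ⟶ F.obj X :=
    (adjF.homEquiv (Over.mk (T.hom ≫ (F.obj Y).hom)) X) β
  have hψ0 : (Over.pullback f).map ψ0 ≫ adjF.counit.app X = β := by
    have h := (adjF.homEquiv (Over.mk (T.hom ≫ (F.obj Y).hom)) X).symm_apply_apply β
    rwa [Adjunction.homEquiv_counit] at h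
  -- ψ0 composed with F.map g is the canonical morphism
  have hkey : β ≫ g = (Over.pullback f).map
      (Over.homMk (U := Over.mk (T.hom ≫ (F.obj Y).hom)) (V := F.obj Y) T.hom rfl) ≫ adjF.counit.app Y := by
    ext
    simp only [Over.comp_left, Over.pullback_map_left, Over.homMk_left, β, Category.assoc]
    rw [← pullback.condition, reassoc_of% hc]
    simp only [k, k0, Category.assoc, pullback.lift_snd_assoc]
    rfl
  have hψg : ψ0 ≫ F.map g = Over.homMk (U := Over.mk (T.hom ≫ (F.obj Y).hom)) (V := F.obj Y) T.hom rfl := by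
    apply (adjF.homEquiv (Over.mk (T.hom ≫ (F.obj Y).hom)) Y).symm.injective
    rw [Adjunction.homEquiv_naturality_right_symm]
    simp only [ψ0]
    rw [Equiv.symm_apply_apply, Adjunction.homEquiv_counit]
    exact hkey
  have hψm : ψ0.left ≫ m = T.hom := by
    have := congrArg CommaMorphism.left hψg
    simpa using this
  -- auxiliary lifts
  let Q : pullback (F.obj X).hom f ⟶ pullback m p :=
    pullback.lift (pullback.fst (F.obj X).hom f) n
      (by simp only [n, p, pullback.lift_fst])
  have hQj : Q ≫ j = 𝟙 _ := by
    apply pullback.hom_ext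
    · simp only [Q, j, Category.assoc, pullback.lift_fst, Category.id_comp]
    · simp only [Q, j, n, p, Category.assoc, pullback.lift_snd, pullback.lift_snd_assoc,
        Category.id_comp]
  let E : pullback m p ⟶ pullback T.hom p :=
    pullback.lift (pullback.fst m p ≫ φ.left) (pullback.snd m p)
      (by rw [Category.assoc, hφw, pullback.condition])
  have hEc : E ≫ c = pullback.lift (pullback.snd m p) x hx.symm := by
    have h := congrArg CommaMorphism.left hφ
    simp only [Over.comp_left, Over.pullback_map_left, Over.homMk_left, α] at h
    convert h using 2 <;> rfl
  -- first inverse identity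
  have hinv : φ.left ≫ ψ0.left = 𝟙 (F.obj X).left := by
    let φB : F.obj X ⟶ Over.mk (T.hom ≫ (F.obj Y).hom) :=
      Over.homMk φ.left (by simp only [Over.mk_hom, ← Category.assoc, hφw, hm])
    have h2 : (Over.pullback f).map φB ≫ β = adjF.counit.app X := by
      ext
      simp only [Over.comp_left, Over.pullback_map_left, Over.homMk_left, β, φB, Category.assoc]
      have hDkQE : pullback.lift (pullback.fst (F.obj X).hom f ≫ φ.left)
          (pullback.snd (F.obj X).hom f) (by
            rw [Category.assoc, reassoc_of% hφw, hm, pullback.condition]) ≫ k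
          = Q ≫ E := by
        apply pullback.hom_ext
        · simp only [Q, E, k, Category.assoc, pullback.lift_fst, pullback.lift_fst_assoc]
        · apply pullback.hom_ext
          · simp only [Q, E, k, k0, n, p, Category.assoc, pullback.lift_fst, pullback.lift_snd,
              pullback.lift_fst_assoc, pullback.lift_snd_assoc]
            rw [hφw]
          · simp only [Q, E, k, k0, n, Category.assoc, pullback.lift_snd, pullback.lift_snd_assoc]
      have : pullback.lift (pullback.fst (F.obj X).hom f ≫ φ.left) (pullback.snd (F.obj X).hom f)
          (by rw [Category.assoc, reassoc_of% hφw, hm, pullback.condition])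
          ≫ k ≫ c ≫ pullback.snd e g.left = eX := by
        rw [← Category.assoc, hDkQE, Category.assoc, reassoc_of% hEc, pullback.lift_snd]
        simp only [x]
        rw [← Category.assoc, hQj, Category.id_comp]
      convert this using 2 <;> rfl
    have h3 : φB ≫ ψ0 = 𝟙 (F.obj X) := by
      apply (adjF.homEquiv (F.obj X) X).symm.injective
      simp only [ψ0]
      rw [Adjunction.homEquiv_naturality_left_symm, Equiv.symm_apply_apply, h2,
        Adjunction.homEquiv_counit]
      simp
    have := congrArg CommaMorphism.left h3
    simpa [φB] using this
  -- second inverse identity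
  have hinv2 : ψ0.left ≫ φ.left = 𝟙 T.left := by
    let ψ : T ⟶ Over.mk m := Over.homMk ψ0.left hψm
    have h2 : (Over.pullback p).map ψ ≫ α = adjG.counit.app Z := by
      ext
      simp only [Over.comp_left, Over.pullback_map_left, Over.homMk_left, α, ψ, Category.assoc]
      apply pullback.hom_ext
      · simp only [Category.assoc, pullback.lift_fst, pullback.lift_snd]
        rw [hc]
        simp
        exact pullback.lift_snd _ _ _
      · simp only [Category.assoc, pullback.lift_snd]
        -- goal : lift (fst ≫ ψ0.left) snd ≫ x = c ≫ pullback.snd e g.left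
        have hMj : pullback.lift (pullback.fst T.hom p ≫ ψ0.left) (pullback.snd T.hom p)
            (by rw [Category.assoc, hψm, pullback.condition]) ≫ j
            = k' ≫ pullback.lift (pullback.fst _ _ ≫ ψ0.left) (pullback.snd _ _)
              (by rw [Category.assoc, Over.w ψ0]; exact pullback.condition) := by
          apply pullback.hom_ext
          · simp only [k', j, Category.assoc, pullback.lift_fst, pullback.lift_fst_assoc]
          · simp only [k', j, Category.assoc, pullback.lift_snd, pullback.lift_snd_assoc]
        have hstar := congrArg CommaMorphism.left hψ0
        simp only [Over.comp_left, Over.pullback_map_left, β] at hstar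
        have : pullback.lift (pullback.fst T.hom p ≫ ψ0.left) (pullback.snd T.hom p)
            (by rw [Category.assoc, hψm, pullback.condition]) ≫ x
            = c ≫ pullback.snd e g.left := by
          simp only [x, ← Category.assoc]
          rw [hMj]
          simp only [Category.assoc]
          rw [show pullback.lift (pullback.fst _ _ ≫ ψ0.left) (pullback.snd _ _) _ ≫ eX
              = k ≫ c ≫ pullback.snd e g.left from by convert hstar using 2 <;> rfl]
          rw [← Category.assoc, ← Category.assoc, Category.assoc k' k, ← Category.assoc k' k,
            hk'k, Category.id_comp]
        convert this using 2 <;> rfl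
    have h3 : ψ ≫ φ = 𝟙 T := by
      apply (adjG.homEquiv T Z).symm.injective
      simp only [φ]
      rw [Adjunction.homEquiv_naturality_left_symm, Equiv.symm_apply_apply, h2,
        Adjunction.homEquiv_counit]
      simp
    have := congrArg CommaMorphism.left h3
    simpa [ψ] using this
  have hiso : IsIso φ.left := ⟨ψ0.left, hinv, hinv2⟩
  have hK : K (φ.left ≫ T.hom) := hKiso.toRespectsLeft.precomp φ.left hiso T.hom hT
  rwa [hφw] at hK

/-- suppose every pullback functor along a `K`-map has a right adjoint
(pushforward), `J` and `K` are closed under isomorphisms, `K` is closed under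
pullbacks, and `f ∈ K`.  If the object component of `h_*` preserves `K`-maps for
every `h ∈ K`, then the arrow component of `f_*` preserves `K`-maps. -/
theorem stmt_16 {C : Type*} [Category C] [HasPullbacks C]
    (J K : MorphismProperty C) (hJiso : J.RespectsIso) (hKiso : K.RespectsIso)
    (hKpb : ∀ ⦃X Y Y' S : C⦄ ⦃f : X ⟶ S⦄ ⦃g : Y ⟶ S⦄ ⦃f' : Y' ⟶ Y⦄ ⦃g' : Y' ⟶ X⦄,
      IsPullback f' g' g f → K g → K g')
    (pushforward : ∀ ⦃X Y : C⦄ (h : X ⟶ Y), K h → (Over X ⥤ Over Y))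
    (adj : ∀ ⦃X Y : C⦄ (h : X ⟶ Y) (hh : K h), Over.pullback h ⊣ pushforward h hh)
    {A B : C} (f : A ⟶ B) (hf : K f)
    (hobj : ∀ ⦃X Y : C⦄ (h : X ⟶ Y) (hh : K h), ∀ ⦃Z : C⦄ (g : Z ⟶ X), K g →
      K (((pushforward h hh).obj (Over.mk g)).hom)) :
    ∀ ⦃X Y : Over A⦄ (g : X ⟶ Y), sliceClass K A g →
      sliceClass K B ((pushforward f hf).map g) := by
  intro X Y g hg
  have hp : K (pullback.fst ((pushforward f hf).obj Y).hom f) :=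
    hKpb (IsPullback.of_hasPullback ((pushforward f hf).obj Y).hom f).flip hf
  have hg' : K (pullback.fst (((adj f hf).counit.app Y).left) g.left) :=
    hKpb (IsPullback.of_hasPullback (((adj f hf).counit.app Y).left) g.left).flip hg
  exact my_aux K hKiso (adj f hf) g (adj _ hp) (hobj _ hp _ hg')
end
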